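/- (Turning point theorem, unstable side λ < 0.) Let φ : ℝ → E be a C^∞ curve and T, Y_1, …, Y_p : ℝ → ℝ be C^∞ functions such that for every λ the point φ(λ) satisfies the first law with temperature T(λ) and potentials Y_i(λ), with T(0) > 0. Suppose λ = 0 is a turning point: φ′(0) ≠ 0 and (M∘φ)′(0) = (X^i∘φ)′(0) = 0 for all i. Suppose σ := (d/dλ)[T′(λ)·(S∘φ)′(λ) + Σ_{i=1}^p Y_i′(λ)·(X^i∘φ)′(λ)] evaluated at λ = 0 satisfies σ < 0. Finally, suppose there exists a continuous map ũ : ℝ → E such that for all λ in a neighborhood of 0, λ·DS_{φ(λ)}(ũ(λ)) = (S∘φ)′(λ) and λ·DX^i_{φ(λ)}(ũ(λ)) = (X^i∘φ)′(λ) for all i. Then there exists ε > 0 such that for all λ ∈ (−ε, 0), the vector û(λ) := φ′(λ) − λ·ũ(λ) satisfies DM_{φ(λ)}(û(λ)) = DS_{φ(λ)}(û(λ)) = DX^i_{φ(λ)}(û(λ)) = 0 for all i, and B_{φ(λ)}(û(λ), û(λ)) < 0; in particular φ(λ) is thermodynamically unstable for all λ ∈ (−ε, 0). -/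

import Mathlib

open Filter Topology

/-- The second Fréchet derivative of `f : E → ℝ` at `φ`, applied to `u`, `v`. -/
noncomputable def D2 {E : Type*} [NormedAddCommGroup E] [NormedSpace ℝ E]
    (f : E → ℝ) (φ u v : E) : ℝ :=
  fderiv ℝ (fderiv ℝ f) φ u v

/-- `φ` satisfies the first law with temperature `T` and potentials `Y i`:
`DM_φ = T·DS_φ + ∑ i, Y i · DX^i_φ` as continuous linear functionals. -/
def FirstLaw {E : Type*} [NormedAddCommGroup E] [NormedSpace ℝ E] {p : ℕ}
    (M S : E → ℝ) (X : Fin p → E → ℝ) (φ : E) (T : ℝ) (Y : Fin p → ℝ) : Prop :=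
  fderiv ℝ M φ = T • fderiv ℝ S φ + ∑ i, Y i • fderiv ℝ (X i) φ

/-- The canonical bilinear form
`B_φ(u,v) = D²M_φ(u,v) − T·D²S_φ(u,v) − ∑ i, Y i·D²X^i_φ(u,v)`. -/
noncomputable def Bform {E : Type*} [NormedAddCommGroup E] [NormedSpace ℝ E] {p : ℕ}
    (M S : E → ℝ) (X : Fin p → E → ℝ) (φ : E) (T : ℝ) (Y : Fin p → ℝ) (u v : E) : ℝ :=
  D2 M φ u v - T * D2 S φ u v - ∑ i, Y i * D2 (X i) φ u v

/-!
Differentiating the first law along the curve gives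
`B_{φ(λ)}(φ'(λ), v) = T'(λ)·DS(v) + ∑ i, Y_i'(λ)·DX^i(v)`. For `û = φ' - λ ũ`, which by the
hypothesis on `ũ` kills `DS` and every `DX^i` (hence `DM`), symmetry of `B` then gives
`B(û, û) = -F(λ) + λ² B(ũ, ũ)`, where `F(λ) = T'·(S∘φ)' + ∑ i, Y_i'·(X^i∘φ)'` is the function whose
derivative at `0` is `σ`. At the turning point the first law forces `(S∘φ)'(0) = 0` (as `T(0) > 0`),
so `F(0) = 0` and `F(λ) = σλ + o(λ)`, which is positive for small `λ < 0` and dominates the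
`O(λ²)` term.
-/

lemma eventually_neg_add_sq_mul_lt_zero {F G : ℝ → ℝ} {σ : ℝ} (hF : HasDerivAt F σ 0)
    (hF0 : F 0 = 0) (hσ : σ < 0) (hG : ContinuousAt G 0) :
    ∀ᶠ l in 𝓝[<] 0, -F l + l ^ 2 * G l < 0 := by
  have hslope : Tendsto (fun l => F l / l) (𝓝[<] 0) (𝓝 σ) :=
    ((hasDerivAt_iff_tendsto_slope.mp hF).mono_left (nhdsLT_le_nhdsNE 0)).congr fun l => by
      simp [slope, hF0, div_eq_inv_mul]
  have hlim : Tendsto (fun l => -(F l / l) + l * G l) (𝓝[<] 0) (𝓝 (-σ)) := by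
    simpa using hslope.neg.add ((continuousAt_id.mul hG).tendsto.mono_left nhdsWithin_le_nhds)
  filter_upwards [hlim.eventually_const_lt (neg_pos.mpr hσ), self_mem_nhdsWithin]
    with l hpos (hl : l < 0)
  have hfactor : -F l + l ^ 2 * G l = l * (-(F l / l) + l * G l) := by
    rw [mul_add, mul_neg, mul_div_cancel₀ _ hl.ne]
    ring
  exact hfactor ▸ mul_neg_of_neg_of_pos hl hpos

section

variable {E : Type*} [NormedAddCommGroup E] [NormedSpace ℝ E] {p : ℕ}
  {M S : E → ℝ} {X : Fin p → E → ℝ}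

lemma FirstLaw.apply {x : E} {T : ℝ} {Y : Fin p → ℝ} (h : FirstLaw M S X x T Y) (v : E) :
    fderiv ℝ M x v = T * fderiv ℝ S x v + ∑ i, Y i * fderiv ℝ (X i) x v := by
  simpa [sum_apply] using DFunLike.congr_fun h v

lemma FirstLaw.deriv_comp {φ : ℝ → E} {l T : ℝ} {Y : Fin p → ℝ}
    (h : FirstLaw M S X (φ l) T Y) (hM : DifferentiableAt ℝ M (φ l))
    (hS : DifferentiableAt ℝ S (φ l)) (hX : ∀ i, DifferentiableAt ℝ (X i) (φ l))
    (hφ : DifferentiableAt ℝ φ l) :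
    deriv (M ∘ φ) l = T * deriv (S ∘ φ) l + ∑ i, Y i * deriv (X i ∘ φ) l := by
  have hXφ : ∀ i, deriv (X i ∘ φ) l = fderiv ℝ (X i) (φ l) (deriv φ l) :=
    fun i => fderiv_comp_deriv l (hX i) hφ
  simp only [hXφ, fderiv_comp_deriv l hM hφ, fderiv_comp_deriv l hS hφ]
  exact h.apply _

lemma fderiv_deriv_sub_smul_eq_zero {f : E → ℝ} {φ : ℝ → E} {l : ℝ}
    (hf : DifferentiableAt ℝ f (φ l)) (hφ : DifferentiableAt ℝ φ l) {w : E}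
    (hw : l * fderiv ℝ f (φ l) w = deriv (f ∘ φ) l) :
    fderiv ℝ f (φ l) (deriv φ l - l • w) = 0 := by
  rw [map_sub, map_smul, smul_eq_mul, hw, fderiv_comp_deriv l hf hφ, sub_self]

lemma hasDerivAt_fderiv_comp_apply {f : E → ℝ} (hf : ContDiff ℝ 2 f) {φ : ℝ → E} {l : ℝ}
    (hφ : DifferentiableAt ℝ φ l) (v : E) :
    HasDerivAt (fun t => fderiv ℝ f (φ t) v) (D2 f (φ l) (deriv φ l) v) l := by
  have hf' : DifferentiableAt ℝ (fderiv ℝ f) (φ l) :=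
    (hf.fderiv_right (m := 1) le_rfl).differentiable one_ne_zero (φ l)
  exact (ContinuousLinearMap.apply ℝ ℝ v).hasFDerivAt.comp_hasDerivAt l
    (hf'.hasFDerivAt.comp_hasDerivAt l hφ.hasDerivAt)

lemma bform_deriv_left_of_firstLaw (hM : ContDiff ℝ 2 M) (hS : ContDiff ℝ 2 S)
    (hX : ∀ i, ContDiff ℝ 2 (X i)) {φ : ℝ → E} {T : ℝ → ℝ} {Y : Fin p → ℝ → ℝ}
    (hfl : ∀ t, FirstLaw M S X (φ t) (T t) (fun i => Y i t)) {l : ℝ}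
    (hφ : DifferentiableAt ℝ φ l) (hT : DifferentiableAt ℝ T l)
    (hY : ∀ i, DifferentiableAt ℝ (Y i) l) (v : E) :
    Bform M S X (φ l) (T l) (fun i => Y i l) (deriv φ l) v
      = deriv T l * fderiv ℝ S (φ l) v + ∑ i, deriv (Y i) l * fderiv ℝ (X i) (φ l) v := by
  have hrhs : HasDerivAt (fun t => T t * fderiv ℝ S (φ t) v + ∑ i, Y i t * fderiv ℝ (X i) (φ t) v)
      (deriv T l * fderiv ℝ S (φ l) v + T l * D2 S (φ l) (deriv φ l) v
        + ∑ i, (deriv (Y i) l * fderiv ℝ (X i) (φ l) v + Y i l * D2 (X i) (φ l) (deriv φ l) v))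
      l :=
    (hT.hasDerivAt.mul (hasDerivAt_fderiv_comp_apply hS hφ v)).add <|
      HasDerivAt.fun_sum fun i _ =>
        (hY i).hasDerivAt.mul (hasDerivAt_fderiv_comp_apply (hX i) hφ v)
  have hlhs := hasDerivAt_fderiv_comp_apply hM hφ v
  simp only [(hfl _).apply v] at hlhs
  rw [Bform, hlhs.unique hrhs, Finset.sum_add_distrib]
  ring

lemma apply_sub_smul_self_of_symm {B : E →L[ℝ] E →L[ℝ] ℝ} (hB : ∀ u v, B u v = B v u)
    (v w : E) (c : ℝ) :
    B (v - c • w) (v - c • w) = B v (v - c • w) - c * B v w + c ^ 2 * B w w := by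
  simp only [map_sub, map_smul, sub_apply, smul_apply, smul_eq_mul]
  rw [hB w v]
  ring

noncomputable def bformCLM (M S : E → ℝ) (X : Fin p → E → ℝ) (x : E) (T : ℝ) (Y : Fin p → ℝ) :
    E →L[ℝ] E →L[ℝ] ℝ :=
  fderiv ℝ (fderiv ℝ M) x - T • fderiv ℝ (fderiv ℝ S) x - ∑ i, Y i • fderiv ℝ (fderiv ℝ (X i)) x

lemma bform_eq_bformCLM_apply (x : E) (T : ℝ) (Y : Fin p → ℝ) (u v : E) :
    Bform M S X x T Y u v = bformCLM M S X x T Y u v := by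
  simp [Bform, bformCLM, D2]

lemma bformCLM_comm (hM : ContDiff ℝ 2 M) (hS : ContDiff ℝ 2 S) (hX : ∀ i, ContDiff ℝ 2 (X i))
    (x : E) (T : ℝ) (Y : Fin p → ℝ) (u v : E) :
    bformCLM M S X x T Y u v = bformCLM M S X x T Y v u := by
  have hsymm {f : E → ℝ} (hf : ContDiff ℝ 2 f) : IsSymmSndFDerivAt ℝ f x :=
    hf.contDiffAt.isSymmSndFDerivAt (by simp [minSmoothness_of_isRCLikeNormedField])
  simp [bformCLM, hsymm hM u v, hsymm hS u v, hsymm (hX _) u v]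

lemma continuous_bform_comp (hM : ContDiff ℝ 2 M) (hS : ContDiff ℝ 2 S)
    (hX : ∀ i, ContDiff ℝ 2 (X i)) {φ : ℝ → E} {T : ℝ → ℝ} {Y : Fin p → ℝ → ℝ} {u : ℝ → E}
    (hφ : Continuous φ) (hT : Continuous T) (hY : ∀ i, Continuous (Y i)) (hu : Continuous u) :
    Continuous fun l => Bform M S X (φ l) (T l) (fun i => Y i l) (u l) (u l) := by
  have hD2 {f : E → ℝ} (hf : ContDiff ℝ 2 f) : Continuous fun l => fderiv ℝ (fderiv ℝ f) (φ l) :=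
    ((hf.fderiv_right (m := 1) le_rfl).continuous_fderiv one_ne_zero).comp hφ
  have hB : Continuous fun l => bformCLM M S X (φ l) (T l) (fun i => Y i l) :=
    ((hD2 hM).sub (hT.smul (hD2 hS))).sub <|
      continuous_finsetSum _ fun i _ => (hY i).smul (hD2 (hX i))
  simpa only [bform_eq_bformCLM_apply] using (hB.clm_apply hu).clm_apply hu

lemma bform_turning_vector (hM : ContDiff ℝ 2 M) (hS : ContDiff ℝ 2 S)
    (hX : ∀ i, ContDiff ℝ 2 (X i)) {φ : ℝ → E} {T : ℝ → ℝ} {Y : Fin p → ℝ → ℝ}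
    (hfl : ∀ t, FirstLaw M S X (φ t) (T t) (fun i => Y i t)) {l : ℝ}
    (hφ : DifferentiableAt ℝ φ l) (hT : DifferentiableAt ℝ T l)
    (hY : ∀ i, DifferentiableAt ℝ (Y i) l) {w : E}
    (hSw : l * fderiv ℝ S (φ l) w = deriv (S ∘ φ) l)
    (hXw : ∀ i, l * fderiv ℝ (X i) (φ l) w = deriv (X i ∘ φ) l) :
    Bform M S X (φ l) (T l) (fun i => Y i l) (deriv φ l - l • w) (deriv φ l - l • w)
      = -(deriv T l * deriv (S ∘ φ) l + ∑ i, deriv (Y i) l * deriv (X i ∘ φ) l)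
        + l ^ 2 * Bform M S X (φ l) (T l) (fun i => Y i l) w w := by
  have hSu := fderiv_deriv_sub_smul_eq_zero (hS.differentiable two_ne_zero _) hφ hSw
  have hXu i := fderiv_deriv_sub_smul_eq_zero ((hX i).differentiable two_ne_zero _) hφ (hXw i)
  have hvu : Bform M S X (φ l) (T l) (fun i => Y i l) (deriv φ l) (deriv φ l - l • w) = 0 := by
    simp [bform_deriv_left_of_firstLaw hM hS hX hfl hφ hT hY, hSu, hXu]
  have hvw : l * Bform M S X (φ l) (T l) (fun i => Y i l) (deriv φ l) w
      = deriv T l * deriv (S ∘ φ) l + ∑ i, deriv (Y i) l * deriv (X i ∘ φ) l := by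
    simp only [bform_deriv_left_of_firstLaw hM hS hX hfl hφ hT hY, ← hSw, ← hXw, mul_add,
      Finset.mul_sum, mul_left_comm]
  simp only [bform_eq_bformCLM_apply] at hvu hvw ⊢
  rw [apply_sub_smul_self_of_symm (bformCLM_comm hM hS hX _ _ _)]
  linear_combination hvu - hvw

end

theorem turning_point_theorem_neg
    {E : Type*} [NormedAddCommGroup E] [NormedSpace ℝ E]
    {p : ℕ} (M S : E → ℝ) (X : Fin p → E → ℝ)
    (hM : ContDiff ℝ (⊤ : ℕ∞) M) (hS : ContDiff ℝ (⊤ : ℕ∞) S)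
    (hX : ∀ i, ContDiff ℝ (⊤ : ℕ∞) (X i))
    (φ : ℝ → E) (hφ : ContDiff ℝ (⊤ : ℕ∞) φ)
    (T : ℝ → ℝ) (Y : Fin p → ℝ → ℝ)
    (hT : ContDiff ℝ (⊤ : ℕ∞) T) (hY : ∀ i, ContDiff ℝ (⊤ : ℕ∞) (Y i))
    (hfl : ∀ l : ℝ, FirstLaw M S X (φ l) (T l) (fun i => Y i l))
    (hT0 : 0 < T 0)
    (hturnM : deriv (M ∘ φ) 0 = 0) (hturnX : ∀ i, deriv (X i ∘ φ) 0 = 0)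
    (hσ : deriv (fun l =>
      deriv T l * deriv (S ∘ φ) l + ∑ i, deriv (Y i) l * deriv (X i ∘ φ) l) 0 < 0)
    (u' : ℝ → E) (hu'cont : Continuous u')
    (hu' : ∀ᶠ l in 𝓝 (0 : ℝ),
      l * fderiv ℝ S (φ l) (u' l) = deriv (S ∘ φ) l ∧
      ∀ i, l * fderiv ℝ (X i) (φ l) (u' l) = deriv (X i ∘ φ) l) :
    ∃ ε > 0, ∀ l ∈ Set.Ioo (-ε) (0 : ℝ),
      fderiv ℝ M (φ l) (deriv φ l - l • u' l) = 0 ∧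
      fderiv ℝ S (φ l) (deriv φ l - l • u' l) = 0 ∧
      (∀ i, fderiv ℝ (X i) (φ l) (deriv φ l - l • u' l) = 0) ∧
      Bform M S X (φ l) (T l) (fun i => Y i l)
        (deriv φ l - l • u' l) (deriv φ l - l • u' l) < 0 := by
  have h2 : (2 : WithTop ℕ∞) ≤ (⊤ : ℕ∞) := by norm_cast
  have hM2 := hM.of_le h2
  have hS2 := hS.of_le h2
  have hX2 i := (hX i).of_le h2
  have hMd := hM2.differentiable two_ne_zero
  have hSd := hS2.differentiable two_ne_zero
  have hXd i := (hX2 i).differentiable two_ne_zero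
  have hφd := hφ.differentiable (by simp)
  have hTd := hT.differentiable (by simp)
  have hYd i := (hY i).differentiable (by simp)
  have hs0 : deriv (S ∘ φ) 0 = 0 := by
    have h := (hfl 0).deriv_comp (hMd _) (hSd _) (fun i => hXd i _) (hφd 0)
    simp only [hturnM, hturnX, mul_zero, Finset.sum_const_zero, add_zero] at h
    exact (mul_eq_zero.mp h.symm).resolve_left hT0.ne'
  -- a nonzero `deriv` at `0` already forces differentiability there
  have hneg := eventually_neg_add_sq_mul_lt_zero
    (differentiableAt_of_deriv_ne_zero hσ.ne).hasDerivAt (by simp [hs0, hturnX]) hσ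
    (continuous_bform_comp hM2 hS2 hX2 hφ.continuous hT.continuous (fun i => (hY i).continuous)
      hu'cont).continuousAt
  obtain ⟨a, ha, hsub⟩ :=
    mem_nhdsLT_iff_exists_Ioo_subset.mp (hneg.and (nhdsWithin_le_nhds hu'))
  refine ⟨-a, neg_pos.mpr ha, fun l hl => ?_⟩
  obtain ⟨hB, hSw, hXw⟩ := hsub (by simpa using hl)
  have hSu := fderiv_deriv_sub_smul_eq_zero (hSd _) (hφd l) hSw
  have hXu i := fderiv_deriv_sub_smul_eq_zero (hXd i _) (hφd l) (hXw i)
  refine ⟨by simp [(hfl l).apply, hSu, hXu], hSu, hXu, ?_⟩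
  rwa [bform_turning_vector hM2 hS2 hX2 hfl (hφd l) (hTd l) (fun i => hYd i l) hSw hXw]
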